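/- arXiv:0908.2503 — 2 statements merged into one kernel-verified Lean document; each statement's English description precedes it below -/
import Mathlib

section
/- Let Y be an integrable real-valued random variable whose distribution function F_Y is strictly increasing, and let τ ∈ (0,1). Then the τ-quantile q_τ = inf{t : F_Y(t) ≥ τ} is the unique minimizer of q ↦ E[ρ_τ(Y - q)]: for every q ≠ q_τ, E[ρ_τ(Y - q)] > E[ρ_τ(Y - q_τ)]. -/
/-!
Write `ρ_τ(u) = τ u + (-u)⁺` and pass to the law `ν` of `Y`, with distribution function `F`.
For `a ≤ b` the increment `(b - y)⁺ - (a - y)⁺` lies between `(b - a) 1{y ≤ a}` and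
`(b - a) 1{y < b}`, so the risk `R(q) = E ρ_τ(Y - q)` satisfies
`(b - a)(F(a) - τ) ≤ R(b) - R(a) ≤ (b - a)(F(b-) - τ)`.
Right-continuity of `F` gives `F(q_τ-) ≤ τ ≤ F(q_τ)`. Splitting the interval between `q` and
`q_τ` at an interior point `m`, where `F(m) < τ` (if `q < q_τ`) or `F(m) > τ` (if `q > q_τ`, by
strict monotonicity), one of the two increments has a strict sign and the other a weak one.
-/

open MeasureTheory

/-- The pinball loss function ρ_τ(y) = y·(τ - 1_{y ≤ 0}). -/
noncomputable def pinball (τ y : ℝ) : ℝ := y * (τ - if y ≤ 0 then 1 else 0)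

open Filter Topology Set ProbabilityTheory

lemma pinball_eq_mul_add_max (τ y : ℝ) : pinball τ y = τ * y + max (-y) 0 := by
  unfold pinball
  split_ifs <;> grind

lemma measurable_pinball (τ : ℝ) : Measurable (pinball τ) := by
  simp_rw [funext (pinball_eq_mul_add_max τ)]
  fun_prop

lemma integrable_pinball_sub {ν : Measure ℝ} [IsFiniteMeasure ν] (hν : Integrable id ν)
    (τ q : ℝ) : Integrable (fun y ↦ pinball τ (y - q)) ν := by
  simp_rw [pinball_eq_mul_add_max]
  have h := hν.sub (integrable_const q)
  exact (h.const_mul τ).add h.neg.pos_part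

lemma mul_indicator_sub_le_pinball_sub {τ a b : ℝ} (hab : a ≤ b) (y : ℝ) :
    (b - a) * ((Iic a).indicator 1 y - τ) ≤ pinball τ (y - b) - pinball τ (y - a) := by
  simp only [pinball_eq_mul_add_max, indicator_apply, mem_Iic, Pi.one_apply]
  split_ifs <;> grind

lemma pinball_sub_le_mul_indicator_sub {τ a b : ℝ} (hab : a ≤ b) (y : ℝ) :
    pinball τ (y - b) - pinball τ (y - a) ≤ (b - a) * ((Iio b).indicator 1 y - τ) := by
  simp only [pinball_eq_mul_add_max, indicator_apply, mem_Iio, Pi.one_apply]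
  split_ifs <;> grind

noncomputable def pinballRisk (ν : Measure ℝ) (τ q : ℝ) : ℝ := ∫ y, pinball τ (y - q) ∂ν

section Indicator

variable {α : Type*} [MeasurableSpace α] {μ : Measure α} {s : Set α}

lemma integrable_indicator_one [IsFiniteMeasure μ] (hs : MeasurableSet s) :
    Integrable (s.indicator (1 : α → ℝ)) μ :=
  (integrable_const (1 : ℝ)).indicator hs

lemma integrable_mul_indicator_sub [IsFiniteMeasure μ] (hs : MeasurableSet s) (c τ : ℝ) :
    Integrable (fun x ↦ c * (s.indicator 1 x - τ)) μ :=
  ((integrable_indicator_one hs).sub (integrable_const τ)).const_mul c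

lemma integral_mul_indicator_sub [IsProbabilityMeasure μ] (hs : MeasurableSet s) (c τ : ℝ) :
    ∫ x, c * (s.indicator 1 x - τ) ∂μ = c * (μ.real s - τ) := by
  rw [integral_const_mul, integral_sub (integrable_indicator_one hs) (integrable_const τ),
    integral_indicator_one hs, integral_const, probReal_univ, one_smul]

end Indicator

section Risk

variable {ν : Measure ℝ} [IsProbabilityMeasure ν]

lemma measureReal_Iio_eq_leftLim_cdf (x : ℝ) : ν.real (Iio x) = Function.leftLim (cdf ν) x := by
  have h := (cdf ν).measure_Iio (tendsto_cdf_atBot ν) x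
  rw [measure_cdf, sub_zero] at h
  rw [measureReal_def, h, ENNReal.toReal_ofReal]
  exact (cdf_nonneg ν (x - 1)).trans ((cdf ν).mono.le_leftLim (by linarith))

variable (hν : Integrable id ν) {τ a b : ℝ}
include hν

lemma pinballRisk_sub_eq_integral :
    pinballRisk ν τ b - pinballRisk ν τ a = ∫ y, (pinball τ (y - b) - pinball τ (y - a)) ∂ν :=
  (integral_sub (integrable_pinball_sub hν τ b) (integrable_pinball_sub hν τ a)).symm

lemma mul_cdf_sub_le_pinballRisk_sub (hab : a ≤ b) :
    (b - a) * (cdf ν a - τ) ≤ pinballRisk ν τ b - pinballRisk ν τ a := by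
  rw [cdf_eq_real, ← integral_mul_indicator_sub measurableSet_Iic, pinballRisk_sub_eq_integral hν]
  exact integral_mono (integrable_mul_indicator_sub measurableSet_Iic _ _)
    ((integrable_pinball_sub hν τ b).sub (integrable_pinball_sub hν τ a))
    (mul_indicator_sub_le_pinball_sub hab)

lemma pinballRisk_sub_le_mul_leftLim_cdf_sub (hab : a ≤ b) :
    pinballRisk ν τ b - pinballRisk ν τ a ≤ (b - a) * (Function.leftLim (cdf ν) b - τ) := by
  rw [← measureReal_Iio_eq_leftLim_cdf, ← integral_mul_indicator_sub measurableSet_Iio,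
    pinballRisk_sub_eq_integral hν]
  exact integral_mono ((integrable_pinball_sub hν τ b).sub (integrable_pinball_sub hν τ a))
    (integrable_mul_indicator_sub measurableSet_Iio _ _) (pinball_sub_le_mul_indicator_sub hab)

end Risk

noncomputable def quantile (ν : Measure ℝ) (τ : ℝ) : ℝ := sInf {t | τ ≤ cdf ν t}

section Quantile

variable (ν : Measure ℝ) {τ : ℝ}

lemma nonempty_setOf_le_cdf (hτ : τ < 1) : {t | τ ≤ cdf ν t}.Nonempty :=
  ((tendsto_cdf_atTop ν).eventually (eventually_ge_nhds hτ)).exists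

lemma bddBelow_setOf_le_cdf (hτ : 0 < τ) : BddBelow {t | τ ≤ cdf ν t} := by
  obtain ⟨t₀, ht₀⟩ := eventually_atBot.1 ((tendsto_cdf_atBot ν).eventually (eventually_lt_nhds hτ))
  refine ⟨t₀, fun t ht ↦ ?_⟩
  by_contra! htt₀
  exact (ht₀ t htt₀.le).not_ge ht

variable {ν}

lemma cdf_lt_of_lt_quantile (hτ : 0 < τ) {m : ℝ} (hm : m < quantile ν τ) : cdf ν m < τ :=
  not_le.1 (notMem_of_lt_csInf (s := {t | τ ≤ cdf ν t}) hm (bddBelow_setOf_le_cdf ν hτ))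

lemma le_cdf_quantile (hτ : τ < 1) : τ ≤ cdf ν (quantile ν τ) := by
  have hright : Tendsto (cdf ν) (𝓝[>] quantile ν τ) (𝓝 (cdf ν (quantile ν τ))) :=
    ((cdf ν).right_continuous _).mono_left (nhdsWithin_mono _ Ioi_subset_Ici_self)
  refine ge_of_tendsto hright (eventually_nhdsWithin_of_forall fun t ht ↦ ?_)
  obtain ⟨s, hs, hst⟩ := exists_lt_of_csInf_lt (nonempty_setOf_le_cdf ν hτ) ht
  exact hs.trans ((cdf ν).mono hst.le)

lemma leftLim_cdf_quantile_le (hτ : 0 < τ) : Function.leftLim (cdf ν) (quantile ν τ) ≤ τ :=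
  le_of_tendsto ((cdf ν).mono.tendsto_leftLim _)
    (eventually_nhdsWithin_of_forall fun _ hm ↦ (cdf_lt_of_lt_quantile hτ hm).le)

end Quantile

section Minimizer

variable {ν : Measure ℝ} [IsProbabilityMeasure ν] (hν : Integrable id ν) {τ : ℝ}
include hν

lemma pinballRisk_quantile_lt_of_lt (hτ : 0 < τ) {q : ℝ} (hq : q < quantile ν τ) :
    pinballRisk ν τ (quantile ν τ) < pinballRisk ν τ q := by
  obtain ⟨m, hqm, hmq⟩ := exists_between hq
  have hfirst := pinballRisk_sub_le_mul_leftLim_cdf_sub (τ := τ) hν hqm.le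
  have hsecond := pinballRisk_sub_le_mul_leftLim_cdf_sub (τ := τ) hν hmq.le
  have hm : Function.leftLim (cdf ν) m < τ :=
    ((cdf ν).mono.leftLim_le le_rfl).trans_lt (cdf_lt_of_lt_quantile hτ hmq)
  have hfirst_neg := mul_neg_of_pos_of_neg (sub_pos.2 hqm) (sub_neg.2 hm)
  have hsecond_nonpos := mul_nonpos_of_nonneg_of_nonpos (sub_nonneg.2 hmq.le)
    (sub_nonpos.2 (leftLim_cdf_quantile_le (ν := ν) hτ))
  linarith

lemma pinballRisk_quantile_lt_of_gt (hτ : τ < 1) (hmono : StrictMono (cdf ν)) {q : ℝ}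
    (hq : quantile ν τ < q) : pinballRisk ν τ (quantile ν τ) < pinballRisk ν τ q := by
  obtain ⟨m, hqm, hmq⟩ := exists_between hq
  have hfirst := mul_cdf_sub_le_pinballRisk_sub (τ := τ) hν hqm.le
  have hsecond := mul_cdf_sub_le_pinballRisk_sub (τ := τ) hν hmq.le
  have hm : τ < cdf ν m := (le_cdf_quantile hτ).trans_lt (hmono hqm)
  have hfirst_nonneg :=
    mul_nonneg (sub_nonneg.2 hqm.le) (sub_nonneg.2 (le_cdf_quantile (ν := ν) hτ))
  have hsecond_pos := mul_pos (sub_pos.2 hmq) (sub_pos.2 hm)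
  linarith

end Minimizer

theorem quantile_unique_minimizer_pinball_risk_general
    {Ω : Type*} [MeasurableSpace Ω] (μ : Measure Ω) [IsProbabilityMeasure μ]
    (Y : Ω → ℝ) (hint : Integrable Y μ)
    (τ : ℝ) (hτ : τ ∈ Set.Ioo (0:ℝ) 1)
    (F : ℝ → ℝ) (hF : F = fun t => (μ {ω | Y ω ≤ t}).toReal)
    (hmono : StrictMono F)
    (qτ : ℝ) (hq : qτ = sInf {t : ℝ | τ ≤ F t}) :
    ∀ q : ℝ, q ≠ qτ →
      ∫ ω, pinball τ (Y ω - qτ) ∂μ < ∫ ω, pinball τ (Y ω - q) ∂μ := by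
  have hY := hint.aemeasurable
  set ν := μ.map Y
  have : IsProbabilityMeasure ν := Measure.isProbabilityMeasure_map hY
  have hν : Integrable id ν := (integrable_map_measure aestronglyMeasurable_id hY).2 hint
  have hFν : F = cdf ν := by
    ext t
    rw [hF, cdf_eq_real, measureReal_def, Measure.map_apply_of_aemeasurable hY measurableSet_Iic]
    rfl
  have hrisk (q : ℝ) : ∫ ω, pinball τ (Y ω - q) ∂μ = pinballRisk ν τ q := by
    have hmeas := (measurable_pinball τ).comp (measurable_sub_const q)
    exact (integral_map hY hmeas.aestronglyMeasurable).symm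
  subst hFν
  intro q hne
  have hqτ : qτ = quantile ν τ := hq
  rw [hrisk, hrisk, hqτ]
  rcases (hqτ ▸ hne).lt_or_gt with hlt | hgt
  · exact pinballRisk_quantile_lt_of_lt hν hτ.1 hlt
  · exact pinballRisk_quantile_lt_of_gt hν hτ.2 hmono hgt

theorem quantile_unique_minimizer_pinball_risk
    {Ω : Type*} [MeasurableSpace Ω] (μ : Measure Ω) [IsProbabilityMeasure μ]
    (Y : Ω → ℝ) (hY : Measurable Y) (hint : Integrable Y μ)
    (τ : ℝ) (hτ : τ ∈ Set.Ioo (0:ℝ) 1)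
    (F : ℝ → ℝ) (hF : F = fun t => (μ {ω | Y ω ≤ t}).toReal)
    (hmono : StrictMono F)
    (qτ : ℝ) (hq : qτ = sInf {t : ℝ | τ ≤ F t}) :
    ∀ q : ℝ, q ≠ qτ →
      ∫ ω, pinball τ (Y ω - qτ) ∂μ < ∫ ω, pinball τ (Y ω - q) ∂μ :=
  quantile_unique_minimizer_pinball_risk_general μ Y hint τ hτ F hF hmono qτ hq
end

section
/- For a finite sample y_1, ..., y_m of real numbers and τ ∈ (0,1) with m·τ not an integer, the unique minimizer of b ↦ Σ_{i=1}^m ρ_τ(y_i - b) is the ⌈m·τ⌉-th order statistic of the sample. -/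
lemma pinball_of_nonneg {τ z : ℝ} (h : 0 ≤ z) : pinball τ z = τ * z := by
  unfold pinball; split_ifs with h' <;> nlinarith

lemma pinball_of_nonpos {τ z : ℝ} (h : z ≤ 0) : pinball τ z = (τ - 1) * z := by
  unfold pinball; rw [if_pos h]; ring

lemma le_pinball_left {τ z : ℝ} : τ * z ≤ pinball τ z := by
  unfold pinball; split_ifs with h <;> nlinarith

lemma le_pinball_right {τ z : ℝ} : (τ - 1) * z ≤ pinball τ z := by
  unfold pinball; split_ifs with h <;> nlinarith

lemma pinball_lip_lower {τ w z : ℝ} (h : w ≤ z) :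
    pinball τ w + (τ - 1) * (z - w) ≤ pinball τ z := by
  unfold pinball; split_ifs with h1 h2 h2 <;> nlinarith

lemma pinball_lip_upper {τ w z : ℝ} (h : z ≤ w) :
    pinball τ w + τ * (z - w) ≤ pinball τ z := by
  unfold pinball; split_ifs with h1 h2 h2 <;> nlinarith

theorem sample_quantile_unique_minimizer
    (m : ℕ) (hm : 0 < m) (y : Fin m → ℝ) (hy : Monotone y)
    (τ : ℝ) (hτ : τ ∈ Set.Ioo (0:ℝ) 1)
    (hnotint : ¬ ∃ k : ℤ, (m : ℝ) * τ = (k : ℝ))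
    (i : Fin m) (hi : ((i : ℕ) : ℝ) + 1 = ⌈(m : ℝ) * τ⌉) :
    (∀ b : ℝ, ∑ j, pinball τ (y j - y i) ≤ ∑ j, pinball τ (y j - b))
      ∧ ∀ b : ℝ, (∀ c : ℝ, ∑ j, pinball τ (y j - b) ≤ ∑ j, pinball τ (y j - c)) →
          b = y i := by
  set c := y i with hc
  -- basic facts about m*τ and i
  have hupper : (m : ℝ) * τ < (i : ℕ) + 1 := by
    rw [hi]
    rcases lt_or_eq_of_le (Int.le_ceil ((m:ℝ) * τ)) with h | h
    · exact h
    · exact absurd ⟨_, h⟩ hnotint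
  have hlower : ((i : ℕ) : ℝ) < (m : ℝ) * τ := by
    have := Int.ceil_lt_add_one ((m:ℝ) * τ)
    rw [← hi] at this; linarith
  have him : (i : ℕ) ≤ m := le_of_lt i.isLt
  -- count lemma
  have hcount : ∀ A B : ℝ, ∑ j : Fin m, (if i ≤ j then A else B)
      = ((m - (i:ℕ) : ℕ) : ℝ) * A + ((i:ℕ) : ℝ) * B := by
    intro A B
    rw [Finset.sum_ite, Finset.sum_const, Finset.sum_const]
    have h1 : (Finset.univ.filter (fun j => i ≤ j)) = Finset.Ici i := by
      ext j; simp
    have h2 : (Finset.univ.filter (fun j => ¬ i ≤ j)) = Finset.Iio i := by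
      ext j; simp
    rw [h1, h2, Fin.card_Ici, Fin.card_Iio]
    simp [nsmul_eq_mul]
  -- key strict inequality
  have key : ∀ b : ℝ, b ≠ c →
      ∑ j, pinball τ (y j - c) < ∑ j, pinball τ (y j - b) := by
    intro b hb
    rcases lt_or_gt_of_ne hb with hbc | hbc
    · -- b < c
      have hterm : ∀ j : Fin m,
          pinball τ (y j - c) + (if i ≤ j then τ * (c - b) else (τ - 1) * (c - b))
            ≤ pinball τ (y j - b) := by
        intro j
        split_ifs with hij
        · have hw : 0 ≤ y j - c := by
            have := hy hij; simp only [hc]; linarith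
          rw [pinball_of_nonneg hw]
          calc τ * (y j - c) + τ * (c - b) = τ * (y j - b) := by ring
            _ ≤ pinball τ (y j - b) := le_pinball_left
        · have := pinball_lip_lower (τ := τ) (w := y j - c) (z := y j - b)
            (by linarith)
          calc pinball τ (y j - c) + (τ - 1) * (c - b)
              = pinball τ (y j - c) + (τ - 1) * ((y j - b) - (y j - c)) := by ring_nf
            _ ≤ pinball τ (y j - b) := this
      have hsum := Finset.sum_le_sum (s := Finset.univ) (fun j _ => hterm j)
      rw [Finset.sum_add_distrib, hcount] at hsum
      have hcast : ((m - (i:ℕ) : ℕ) : ℝ) = (m : ℝ) - (i : ℕ) := by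
        rw [Nat.cast_sub him]
      rw [hcast] at hsum
      have hpos : 0 < ((m : ℝ) - (i:ℕ)) * (τ * (c - b)) + ((i:ℕ) : ℝ) * ((τ - 1) * (c - b)) := by
        have : ((m : ℝ) - (i:ℕ)) * (τ * (c - b)) + ((i:ℕ) : ℝ) * ((τ - 1) * (c - b))
            = (c - b) * ((m : ℝ) * τ - (i:ℕ)) := by ring
        rw [this]
        apply mul_pos (by linarith) (by linarith)
      linarith
    · -- c < b
      have hterm : ∀ j : Fin m,
          pinball τ (y j - c) + (if j ≤ i then (τ - 1) * (c - b) else τ * (c - b))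
            ≤ pinball τ (y j - b) := by
        intro j
        split_ifs with hij
        · have hw : y j - c ≤ 0 := by
            have := hy hij; simp only [hc]; linarith
          rw [pinball_of_nonpos hw]
          calc (τ - 1) * (y j - c) + (τ - 1) * (c - b) = (τ - 1) * (y j - b) := by ring
            _ ≤ pinball τ (y j - b) := le_pinball_right
        · have := pinball_lip_upper (τ := τ) (w := y j - c) (z := y j - b)
            (by linarith)
          calc pinball τ (y j - c) + τ * (c - b)
              = pinball τ (y j - c) + τ * ((y j - b) - (y j - c)) := by ring_nf
            _ ≤ pinball τ (y j - b) := this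
      have hcount' : ∑ j : Fin m, (if j ≤ i then (τ - 1) * (c - b) else τ * (c - b))
          = (((i:ℕ) + 1 : ℕ) : ℝ) * ((τ - 1) * (c - b))
            + ((m - ((i:ℕ) + 1) : ℕ) : ℝ) * (τ * (c - b)) := by
        rw [Finset.sum_ite, Finset.sum_const, Finset.sum_const]
        have h1 : (Finset.univ.filter (fun j => j ≤ i)) = Finset.Iic i := by
          ext j; simp
        have h2 : (Finset.univ.filter (fun j => ¬ j ≤ i)) = Finset.Ioi i := by
          ext j; simp
        rw [h1, h2, Fin.card_Iic, Fin.card_Ioi]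
        have h3 : m - 1 - (i:ℕ) = m - ((i:ℕ)+1) := by omega
        rw [h3]
        simp [nsmul_eq_mul]
      have hsum := Finset.sum_le_sum (s := Finset.univ) (fun j _ => hterm j)
      rw [Finset.sum_add_distrib, hcount'] at hsum
      have him' : (i:ℕ) + 1 ≤ m := i.isLt
      have hcast : ((m - ((i:ℕ)+1) : ℕ) : ℝ) = (m : ℝ) - ((i:ℕ) + 1) := by
        rw [Nat.cast_sub him']; push_cast; ring
      rw [hcast] at hsum
      push_cast at hsum
      have hpos : 0 < (((i:ℕ):ℝ) + 1) * ((τ - 1) * (c - b))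
          + ((m : ℝ) - (((i:ℕ):ℝ) + 1)) * (τ * (c - b)) := by
        have heq : (((i:ℕ):ℝ) + 1) * ((τ - 1) * (c - b))
            + ((m : ℝ) - (((i:ℕ):ℝ) + 1)) * (τ * (c - b))
            = (b - c) * (((i:ℕ):ℝ) + 1 - (m : ℝ) * τ) := by ring
        rw [heq]
        apply mul_pos (by linarith) (by linarith)
      linarith
  constructor
  · intro b
    by_cases hb : b = c
    · rw [hb]
    · exact (key b hb).le
  · intro b hb
    by_contra h
    have h1 := key b h
    have h2 := hb c
    linarith
end
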